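/- For n ≥ 4, let m(j) denote the number of isomorphism classes of matroids of rank 2 on a j-element ground set, and let ρ(n) denote the number of partitions of n all of whose parts are at least 2. Then m(n) = 2·m(n−1) − m(n−2) + ρ(n). -/

import Mathlib

/-!
A rank-two matroid is determined up to isomorphism by its loops and its parallel classes, since
its bases are exactly the pairs of non-parallel nonloops. So the isomorphism class of a rank-two
matroid on `{1, …, k}` is recorded by the multiset of sizes of its parallel classes, and every
multiset of positive integers with at least two members and sum at most `k` occurs: colour
`{1, …, k}` block by block and pull back the rank-two uniform matroid on the colours. Hence
`m(k) - m(k - 1)` is the number of partitions of `k` into at least two parts, that is `p(k) - 1`,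
and `p(k) - p(k - 1) = ρ(k)` by removing a part equal to `1`.
-/

namespace PaperPOAM

variable {α : Type*}

/-- A circuit of a matroid: a minimal dependent set. -/
def IsCircuit (M : Matroid α) (C : Set α) : Prop :=
  M.Dep C ∧ ∀ D, D ⊂ C → ¬ M.Dep D

/-- A loop of a matroid: an element whose singleton is dependent. -/
def IsLoop (M : Matroid α) (e : α) : Prop := M.Dep {e}

/-- The set of loops of a matroid. -/
def loops (M : Matroid α) : Set α := {e | IsLoop M e}

/-- A coloop: an element of the ground set contained in every base. -/
def IsColoop (M : Matroid α) (e : α) : Prop := e ∈ M.E ∧ ∀ B, M.IsBase B → e ∈ B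

/-- A cyclic flat: a flat that is a union of circuits, i.e. a flat each of whose
elements lies in a circuit contained in the flat. -/
def IsCyclicFlat (M : Matroid α) (F : Set α) : Prop :=
  M.IsFlat F ∧ ∀ e ∈ F, ∃ C, IsCircuit M C ∧ C ⊆ F ∧ e ∈ C

/-- The rank of a set in a matroid: the largest size of an independent subset. -/
noncomputable def rkOf (M : Matroid α) (X : Set α) : ℕ :=
  sSup {n | ∃ I, M.Indep I ∧ I ⊆ X ∧ I.ncard = n}

/-- The matroid has rank `r`: every base has `r` elements. -/
def RankEq (M : Matroid α) (r : ℕ) : Prop := ∀ B, M.IsBase B → B.ncard = r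

/-- Two matroids are isomorphic: there is a bijection between the ground sets carrying
the bases of one exactly onto the bases of the other. -/
def MatroidIso (M N : Matroid α) : Prop :=
  ∃ f : α → α, Set.BijOn f M.E N.E ∧ ∀ B, B ⊆ M.E → (M.IsBase B ↔ N.IsBase (f '' B))

/-- `M` is the rank-2 Schubert matroid `S(a,b)` on `{1,…,n}`: its bases are exactly the
two-element subsets `{i,j}` of `{1,…,n}` with `i < j`, `a ≤ i`, `b ≤ j`. -/
def IsSchubert2 (n a b : ℕ) (M : Matroid ℕ) : Prop :=
  M.E = Set.Icc 1 n ∧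
  ∀ B, M.IsBase B ↔ ∃ i j, i < j ∧ a ≤ i ∧ b ≤ j ∧ 1 ≤ i ∧ j ≤ n ∧ B = ({i, j} : Set ℕ)

/-- `M` is the rank-3 Schubert matroid `S(a,b,c)` on `{1,…,n}`: its bases are exactly the
three-element subsets `{i,j,k}` of `{1,…,n}` with `i < j < k`, `a ≤ i`, `b ≤ j`, `c ≤ k`. -/
def IsSchubert3 (n a b c : ℕ) (M : Matroid ℕ) : Prop :=
  M.E = Set.Icc 1 n ∧
  ∀ B, M.IsBase B ↔ ∃ i j k, i < j ∧ j < k ∧ a ≤ i ∧ b ≤ j ∧ c ≤ k ∧ 1 ≤ i ∧ k ≤ n ∧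
    B = ({i, j, k} : Set ℕ)

end PaperPOAM

namespace PaperPOAM

/-- The set of matroids of rank 2 on the ground set `{1,…,n}`. -/
def rank2On (n : ℕ) : Set (Matroid ℕ) := {M | M.E = Set.Icc 1 n ∧ RankEq M 2}

/-- The number of isomorphism classes of matroids in a set `S` of matroids:
the number of distinct sets of the form `{N ∈ S | N ≅ M}` for `M ∈ S`. -/
noncomputable def numIsoClasses (S : Set (Matroid ℕ)) : ℕ :=
  {C : Set (Matroid ℕ) | ∃ M ∈ S, C = {N ∈ S | MatroidIso M N}}.ncard

end PaperPOAM

namespace PaperPOAM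

/-- The number of partitions of `n` all of whose parts are at least 2. -/
noncomputable def rho (n : ℕ) : ℕ :=
  Nat.card {p : n.Partition // ∀ i ∈ p.parts, 2 ≤ i}

open Finset Matroid

section FiberSizes

variable {α α' β β' γ : Type*}

theorem _root_.Set.BijOn.sep {f : α → α'} {s : Set α} {t : Set α'} {p : α → Prop} {q : α' → Prop}
    (hf : Set.BijOn f s t) (hpq : ∀ a ∈ s, q (f a) ↔ p a) :
    Set.BijOn f {a ∈ s | p a} {b ∈ t | q b} := by
  refine ⟨fun a ha => ⟨hf.mapsTo ha.1, (hpq a ha.1).2 ha.2⟩, hf.injOn.mono fun a ha => ha.1, ?_⟩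
  rintro b ⟨hb, hqb⟩
  obtain ⟨a, ha, rfl⟩ := hf.surjOn hb
  exact ⟨a, ⟨ha, (hpq a ha).1 hqb⟩, rfl⟩

theorem exists_bijOn_of_card_filter_eq [DecidableEq γ] [Nonempty α'] {s : Finset α}
    {t : Finset α'} {g : α → γ} {g' : α' → γ}
    (h : ∀ c, #{a ∈ s | g a = c} = #{b ∈ t | g' b = c}) :
    ∃ f : α → α', Set.BijOn f s t ∧ ∀ a ∈ s, g' (f a) = g a := by
  have hfiber (c : γ) : ∃ f : α → α', Set.BijOn f {a ∈ s | g a = c} {b ∈ t | g' b = c} := by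
    have hcard : (({a ∈ s | g a = c} : Finset α) : Set α).encard =
        (({b ∈ t | g' b = c} : Finset α') : Set α').encard := by
      simp only [Set.encard_coe_eq_coe_finsetCard, h c]
    simpa using (finite_toSet _).exists_bijOn_of_encard_eq hcard
  choose F hF using hfiber
  have hmem {a : α} (ha : a ∈ s) : F (g a) a ∈ t ∧ g' (F (g a) a) = g a :=
    (hF (g a)).mapsTo ⟨ha, rfl⟩
  refine ⟨fun a => F (g a) a, ⟨fun a ha => (hmem ha).1, fun a ha b hb hab => ?_, fun b hb => ?_⟩,
    fun a ha => (hmem ha).2⟩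
  · have hgab : g a = g b := by
      simpa only [(hmem ha).2, (hmem hb).2] using congrArg g' hab
    refine (hF (g a)).injOn ⟨ha, rfl⟩ ⟨hb, hgab.symm⟩ ?_
    simpa only [hgab] using hab
  · obtain ⟨a, ⟨ha, hga⟩, hab⟩ := (hF (g' b)).surjOn ⟨hb, rfl⟩
    exact ⟨a, ha, by simpa only [hga] using hab⟩

theorem exists_bijOn_of_map_eq [DecidableEq γ] [Nonempty α'] {A : Finset α} {B : Finset α'}
    {φ : α → γ} {ψ : α' → γ} (h : A.val.map φ = B.val.map ψ) :
    ∃ σ : α → α', Set.BijOn σ A B ∧ ∀ x ∈ A, ψ (σ x) = φ x :=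
  exists_bijOn_of_card_filter_eq fun c => by
    simpa [Multiset.count_map, Finset.card_def, Finset.filter_val, eq_comm] using
      congrArg (Multiset.count c) h

theorem exists_bijOn_extend [Nonempty α'] {s S : Finset α}
    {t T : Finset α'} {f : α → α'} (hf : Set.BijOn f s t) (hsS : s ⊆ S) (htT : t ⊆ T)
    (hcard : #S = #T) :
    ∃ F : α → α', Set.BijOn F S T ∧ Set.EqOn F f s ∧ ∀ a ∈ S, F a ∈ t ↔ a ∈ s := by
  classical
  obtain ⟨f', hf'⟩ : ∃ f' : α → α', Set.BijOn f' ↑(S \ s) ↑(T \ t) := by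
    refine (finite_toSet _).exists_bijOn_of_encard_eq ?_
    simp only [Set.encard_coe_eq_coe_finsetCard, card_sdiff_of_subset hsS,
      card_sdiff_of_subset htT, hcard, hf.finsetCard_eq]
  set F := (s : Set α).piecewise f f'
  have h₁ : Set.BijOn F s t := hf.congr (Set.piecewise_eqOn _ _ _).symm
  have h₂ : Set.BijOn F ↑(S \ s) ↑(T \ t) :=
    hf'.congr fun a ha => (Set.piecewise_eq_of_notMem _ _ _ (mem_sdiff.1 ha).2).symm
  have hmem (a : α) (ha : a ∈ S) : F a ∈ t ↔ a ∈ s := by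
    refine ⟨fun hFa => ?_, fun has => h₁.mapsTo has⟩
    by_contra has
    exact (mem_sdiff.1 (h₂.mapsTo (mem_sdiff.2 ⟨ha, has⟩))).2 hFa
  refine ⟨F, ⟨fun a ha => ?_, fun a ha b hb hab => ?_, fun b hb => ?_⟩,
    Set.piecewise_eqOn _ _ _, hmem⟩
  · by_cases has : a ∈ s
    · exact htT (h₁.mapsTo has)
    · exact (mem_sdiff.1 (h₂.mapsTo (mem_sdiff.2 ⟨ha, has⟩))).1
  · have hab' : a ∈ s ↔ b ∈ s := by rw [← hmem a ha, ← hmem b hb, hab]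
    by_cases has : a ∈ s
    · exact h₁.injOn has (hab'.1 has) hab
    · exact h₂.injOn (mem_sdiff.2 ⟨ha, has⟩) (mem_sdiff.2 ⟨hb, mt hab'.2 has⟩) hab
  · by_cases hbt : b ∈ t
    · exact Set.image_mono (coe_subset.2 hsS) (h₁.surjOn hbt)
    · exact Set.image_mono (coe_subset.2 sdiff_subset) (h₂.surjOn (mem_sdiff.2 ⟨hb, hbt⟩))

variable [DecidableEq β] [DecidableEq β']

def fiberSizes (s : Finset α) (g : α → β) : Multiset ℕ :=
  (s.image g).val.map fun c => #{a ∈ s | g a = c}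

theorem pos_of_mem_fiberSizes {s : Finset α} {g : α → β} {i : ℕ} (hi : i ∈ fiberSizes s g) :
    0 < i := by
  obtain ⟨c, hc, rfl⟩ := Multiset.mem_map.1 hi
  obtain ⟨a, ha, rfl⟩ := mem_image.1 hc
  exact card_pos.2 ⟨a, mem_filter.2 ⟨ha, rfl⟩⟩

theorem card_fiberSizes (s : Finset α) (g : α → β) :
    Multiset.card (fiberSizes s g) = #(s.image g) :=
  Multiset.card_map _ _

theorem sum_fiberSizes (s : Finset α) (g : α → β) : (fiberSizes s g).sum = #s :=
  (card_eq_sum_card_image g s).symm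

theorem fiberSizes_eq_of_bijOn_image {s : Finset α} {t : Finset α'} {g : α → β} {g' : α' → β'}
    {σ : β → β'} (hσ : Set.BijOn σ (s.image g) (t.image g'))
    (hcard : ∀ c ∈ s.image g, #{b ∈ t | g' b = σ c} = #{a ∈ s | g a = c}) :
    fiberSizes s g = fiberSizes t g' := by
  have himage : t.image g' = (s.image g).image σ := by
    rw [← coe_inj, coe_image (s := s.image g), hσ.image_eq]
  rw [fiberSizes, fiberSizes, himage, image_val_of_injOn hσ.injOn, Multiset.map_map]
  exact Multiset.map_congr rfl fun c hc => (hcard c hc).symm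

theorem fiberSizes_eq_of_bijOn {s : Finset α} {t : Finset α'} {g : α → β} {g' : α' → β'}
    {f : α → α'} (hf : Set.BijOn f s t)
    (hfg : ∀ a ∈ s, ∀ b ∈ s, g a = g b ↔ g' (f a) = g' (f b)) :
    fiberSizes s g = fiberSizes t g' := by
  rcases isEmpty_or_nonempty α with hα | hα
  · obtain rfl := s.eq_empty_of_isEmpty
    obtain rfl : t = ∅ := by simpa using hf.image_eq.symm
    rfl
  let σ : β → β' := fun c => g' (f (Function.invFunOn g s c))
  have hσ {a : α} (ha : a ∈ s) : σ (g a) = g' (f a) := by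
    have hex : ∃ a' ∈ (s : Set α), g a' = g a := ⟨a, ha, rfl⟩
    exact (hfg _ (Function.invFunOn_mem hex) a ha).1 (Function.invFunOn_eq hex)
  refine fiberSizes_eq_of_bijOn_image (σ := σ) ⟨?_, ?_, ?_⟩ ?_
  · rintro _ hc
    obtain ⟨a, ha, rfl⟩ := mem_image.1 hc
    exact mem_image.2 ⟨f a, hf.mapsTo ha, (hσ ha).symm⟩
  · rintro _ hc _ hc' hcc'
    obtain ⟨a, ha, rfl⟩ := mem_image.1 hc
    obtain ⟨b, hb, rfl⟩ := mem_image.1 hc'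
    rw [hσ ha, hσ hb] at hcc'
    exact (hfg a ha b hb).2 hcc'
  · rintro _ hc
    obtain ⟨b, hb, rfl⟩ := mem_image.1 hc
    obtain ⟨a, ha, rfl⟩ := hf.surjOn hb
    exact ⟨g a, mem_image.2 ⟨a, ha, rfl⟩, hσ ha⟩
  · intro c hc
    obtain ⟨a, ha, rfl⟩ := mem_image.1 hc
    rw [hσ ha]
    refine (Set.BijOn.finsetCard_eq f ?_).symm
    simpa using hf.sep fun b hb => (hfg b hb a ha).symm

theorem exists_bijOn_of_fiberSizes_eq [Nonempty α'] [Nonempty β'] {s : Finset α}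
    {t : Finset α'} {g : α → β} {g' : α' → β'} (h : fiberSizes s g = fiberSizes t g') :
    ∃ f : α → α', Set.BijOn f s t ∧ ∀ a ∈ s, ∀ b ∈ s, g a = g b ↔ g' (f a) = g' (f b) := by
  -- first match each fibre of `g` with a fibre of `g'` of the same size, then match elements
  obtain ⟨σ, hσ, hσcard⟩ := exists_bijOn_of_map_eq h
  have hcard (c' : β') : #{a ∈ s | σ (g a) = c'} = #{b ∈ t | g' b = c'} := by
    by_cases hc' : c' ∈ t.image g'
    · obtain ⟨c, hc, rfl⟩ := hσ.surjOn hc'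
      rw [hσcard c hc]
      congr 1
      refine filter_congr fun a ha => ?_
      exact hσ.injOn.eq_iff (mem_image_of_mem g ha) hc
    · have hs (a : α) (ha : a ∈ s) : σ (g a) ≠ c' := fun hac =>
        hc' (hac ▸ hσ.mapsTo (mem_coe.2 (mem_image_of_mem g ha)))
      have ht (b : α') (hb : b ∈ t) : g' b ≠ c' := fun hbc =>
        hc' (hbc ▸ mem_image_of_mem g' hb)
      rw [filter_false_of_mem hs, filter_false_of_mem ht]
      rfl
  obtain ⟨f, hf, hfσ⟩ := exists_bijOn_of_card_filter_eq hcard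
  refine ⟨f, hf, fun a ha b hb => ?_⟩
  rw [hfσ a ha, hfσ b hb]
  exact (hσ.injOn.eq_iff (mem_image_of_mem g ha) (mem_image_of_mem g hb)).symm

theorem fiberSizes_union [DecidableEq α] {s t : Finset α} {g : α → β}
    (hst : ∀ a ∈ s, ∀ b ∈ t, g a ≠ g b) :
    fiberSizes (s ∪ t) g = fiberSizes s g + fiberSizes t g := by
  have hdisj : Disjoint (s.image g) (t.image g) := by
    simp only [disjoint_left, mem_image]
    rintro _ ⟨a, ha, rfl⟩ ⟨b, hb, hab⟩
    exact hst a ha b hb hab.symm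
  rw [fiberSizes, image_union, ← disjUnion_eq_union _ _ hdisj, disjUnion_val, Multiset.map_add]
  congr 1
  · refine Multiset.map_congr rfl fun c hc => ?_
    obtain ⟨a, ha, rfl⟩ := mem_image.1 hc
    rw [filter_union, filter_false_of_mem fun b hb hba => hst a ha b hb hba.symm, union_empty]
  · refine Multiset.map_congr rfl fun c hc => ?_
    obtain ⟨b, hb, rfl⟩ := mem_image.1 hc
    rw [filter_union, filter_false_of_mem fun a ha hab => hst a ha b hb hab, empty_union]

theorem fiberSizes_of_forall_eq {s : Finset α} {g : α → β} {c : β} (hs : s.Nonempty)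
    (hg : ∀ a ∈ s, g a = c) : fiberSizes s g = {#s} := by
  have himage : s.image g = {c} := by
    rw [image_congr hg, image_const hs]
  rw [fiberSizes, himage, singleton_val, Multiset.map_singleton, filter_true_of_mem hg]

end FiberSizes

theorem exists_fiberSizes_Icc_eq (μ : Multiset ℕ) (hμ : ∀ i ∈ μ, 0 < i) :
    ∃ c : ℕ → ℕ, (∀ e, c e ≠ 0 ↔ e ∈ Icc 1 μ.sum) ∧ fiberSizes (Icc 1 μ.sum) c = μ := by
  induction μ using Multiset.induction_on with
  | empty => exact ⟨0, by simp, rfl⟩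
  | cons a ν ih =>
    obtain ⟨c, hc0, hcν⟩ := ih fun i hi => hμ i (Multiset.mem_cons_of_mem hi)
    have ha : 0 < a := hμ a (Multiset.mem_cons_self a ν)
    set s := ν.sum
    obtain ⟨y, hy⟩ := Infinite.exists_notMem_finset (insert 0 ((Icc 1 s).image c))
    rw [mem_insert, not_or, mem_image, not_exists] at hy
    set c' : ℕ → ℕ := fun e => if e ≤ s then c e else if e ≤ s + a then y else 0
    have hIcc : Icc 1 (a ::ₘ ν).sum = Icc 1 s ∪ Icc (s + 1) (s + a) := by
      ext e
      simp only [Multiset.sum_cons, mem_union, mem_Icc]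
      omega
    refine ⟨c', fun e => ?_, ?_⟩
    · rw [hIcc, mem_union, mem_Icc, mem_Icc]
      simp only [c']
      split_ifs with h₁ h₂
      · rw [hc0, mem_Icc]
        omega
      · simp only [ne_eq, hy.1, not_false_eq_true, true_iff]
        omega
      · simp only [ne_eq, not_true_eq_false, false_iff]
        omega
    · have hs : ∀ e ∈ Icc 1 s, c' e = c e := fun e he => if_pos (mem_Icc.1 he).2
      have ht : ∀ e ∈ Icc (s + 1) (s + a), c' e = y := fun e he => by
        simp only [mem_Icc] at he
        simp only [c', if_neg (show ¬e ≤ s by omega), if_pos he.2]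
      have hcs : fiberSizes (Icc 1 s) c' = ν := by
        rw [← hcν]
        exact fiberSizes_eq_of_bijOn (Set.bijOn_id _) fun e he e' he' => by
          simp only [id, hs e he, hs e' he']
      have hdisj : ∀ e ∈ Icc 1 s, ∀ e' ∈ Icc (s + 1) (s + a), c' e ≠ c' e' := fun e he e' he' => by
        rw [hs e he, ht e' he']
        exact fun h => hy.2 e ⟨he, h⟩
      rw [hIcc, fiberSizes_union hdisj, fiberSizes_of_forall_eq ⟨s + 1, by simp; omega⟩ ht, hcs,
        Nat.card_Icc, add_comm, Multiset.singleton_add]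
      congr 1
      omega

section RankTwo

variable {α : Type*} {M N : Matroid α} {B I : Set α} {e x : α} {r : ℕ}

theorem isBase_iff_indep_ncard_eq (hM : RankEq M r) (hr : r ≠ 0) :
    M.IsBase B ↔ M.Indep B ∧ B.ncard = r := by
  refine ⟨fun hB => ⟨hB.indep, hM B hB⟩, fun ⟨hI, hcard⟩ => ?_⟩
  obtain ⟨B', hB', hBB'⟩ := hI.exists_isBase_superset
  have hfin : B'.Finite := Set.finite_of_ncard_ne_zero (by rw [hM B' hB']; exact hr)
  rwa [Set.eq_of_subset_of_ncard_le hBB' (by rw [hM B' hB', hcard]) hfin]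

theorem isBase_pair_iff (hM : RankEq M 2) :
    M.IsBase {e, x} ↔ M.IsNonloop e ∧ M.IsNonloop x ∧ M.closure {e} ≠ M.closure {x} := by
  rw [isBase_iff_indep_ncard_eq hM two_ne_zero]
  constructor
  · rintro ⟨hI, hcard⟩
    have hex : e ≠ x := by rintro rfl; simp at hcard
    have he := hI.isNonloop_of_mem (Set.mem_insert e {x})
    have hx := hI.isNonloop_of_mem (Set.mem_insert_of_mem e rfl)
    refine ⟨he, hx, fun hcl => ?_⟩
    rcases (he.closure_eq_closure_iff_eq_or_dep hx).1 hcl with h | h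
    exacts [hex h, h hI]
  · rintro ⟨he, hx, hcl⟩
    have hex : e ≠ x := by rintro rfl; exact hcl rfl
    refine ⟨?_, Set.ncard_pair hex⟩
    by_contra hI
    exact hcl ((he.closure_eq_closure_iff_eq_or_dep hx).2 (Or.inr hI))

theorem isNonloop_iff_exists_isBase_pair (hM : RankEq M 2) :
    M.IsNonloop e ↔ ∃ x, M.IsBase {e, x} := by
  refine ⟨fun he => ?_, fun ⟨x, hB⟩ => hB.indep.isNonloop_of_mem (Set.mem_insert e {x})⟩
  obtain ⟨B, hB, heB⟩ := he.exists_mem_isBase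
  obtain ⟨x, hx⟩ := Set.ncard_eq_one.1 (by rw [Set.ncard_sdiff_singleton_of_mem heB, hM B hB] :
    (B \ {e}).ncard = 1)
  refine ⟨x, ?_⟩
  rwa [← hx, Set.insert_sdiff_singleton, Set.insert_eq_of_mem heB]

theorem matroidIso_iff_exists_isBase_pair (hM : RankEq M 2) (hN : RankEq N 2) :
    MatroidIso M N ↔ ∃ f : α → α, Set.BijOn f M.E N.E ∧
      ∀ e ∈ M.E, ∀ x ∈ M.E, (M.IsBase {e, x} ↔ N.IsBase {f e, f x}) := by
  refine ⟨fun ⟨f, hf, hB⟩ => ⟨f, hf, fun e he x hx => ?_⟩, fun ⟨f, hf, hB⟩ => ⟨f, hf, ?_⟩⟩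
  · rw [hB {e, x} (Set.pair_subset he hx), Set.image_pair]
  · suffices h : ∀ B ⊆ M.E, B.ncard = 2 → (M.IsBase B ↔ N.IsBase (f '' B)) by
      refine fun B hBE => ⟨fun hB' => (h B hBE (hM B hB')).1 hB', fun hB' => ?_⟩
      refine (h B hBE ?_).2 hB'
      rw [← hN _ hB', (hf.injOn.mono hBE).ncard_image]
    intro B hBE hcard
    obtain ⟨e, x, -, rfl⟩ := Set.ncard_eq_two.1 hcard
    rw [Set.image_pair]
    exact hB e (hBE (Set.mem_insert e {x})) x (hBE (Set.mem_insert_of_mem e rfl))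

theorem forall_isBase_pair_iff (hM : RankEq M 2) (hN : RankEq N 2) {f : α → α}
    (hf : Set.BijOn f M.E N.E) :
    (∀ e ∈ M.E, ∀ x ∈ M.E, (M.IsBase {e, x} ↔ N.IsBase {f e, f x})) ↔
      (∀ e ∈ M.E, M.IsNonloop e ↔ N.IsNonloop (f e)) ∧
      ∀ e x, M.IsNonloop e → M.IsNonloop x →
        (M.closure {e} = M.closure {x} ↔ N.closure {f e} = N.closure {f x}) := by
  constructor
  · intro hB
    have hnl (e : α) (he : e ∈ M.E) : M.IsNonloop e ↔ N.IsNonloop (f e) := by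
      rw [isNonloop_iff_exists_isBase_pair hM, isNonloop_iff_exists_isBase_pair hN]
      constructor
      · rintro ⟨x, hex⟩
        exact ⟨f x, (hB e he x (hex.subset_ground (Set.mem_insert_of_mem e rfl))).1 hex⟩
      · rintro ⟨y, hey⟩
        obtain ⟨x, hx, rfl⟩ := hf.surjOn (hey.subset_ground (Set.mem_insert_of_mem _ rfl))
        exact ⟨x, (hB e he x hx).2 hey⟩
    refine ⟨hnl, fun e x he hx => ?_⟩
    have h := hB e he.mem_ground x hx.mem_ground
    rw [isBase_pair_iff hM, isBase_pair_iff hN, ← hnl e he.mem_ground,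
      ← hnl x hx.mem_ground] at h
    simpa [he, hx, not_iff_not] using h
  · rintro ⟨hnl, hpar⟩ e he x hx
    rw [isBase_pair_iff hM, isBase_pair_iff hN, ← hnl e he, ← hnl x hx]
    refine and_congr_right fun he' => and_congr_right fun hx' => not_congr (hpar e x he' hx')

theorem rankEq_of_forall_indep_encard_le
    (hle : ∀ J, M.Indep J → J.encard ≤ r) (hI : M.Indep I) (hIr : I.encard = r) : RankEq M r := by
  obtain ⟨B₀, hB₀, hIB₀⟩ := hI.exists_isBase_superset
  have hB₀r : B₀.encard = r :=
    le_antisymm (hle B₀ hB₀.indep) (hIr ▸ Set.encard_le_encard hIB₀)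
  intro B hB
  rw [Set.ncard_def, hB.encard_eq_encard_of_isBase hB₀, hB₀r, ENat.toNat_natCast]

end RankTwo

section Uniform

variable {α : Type*} {E I : Set α} {r : ℕ}

def uniformOn (E : Set α) (r : ℕ) : Matroid α :=
  (IndepMatroid.ofBddAugment E (fun I => I ⊆ E ∧ I.encard ≤ r)
    ⟨Set.empty_subset E, by simp⟩
    (fun _ _ hJ hIJ => ⟨hIJ.trans hJ.1, (Set.encard_le_encard hIJ).trans hJ.2⟩)
    (fun I J hI hJ hlt => by
      obtain ⟨e, heJ, heI⟩ : (J \ I).Nonempty := by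
        rw [Set.nonempty_iff_ne_empty, Ne, Set.sdiff_eq_empty]
        exact fun hJI => (Set.encard_le_encard hJI).not_gt hlt
      refine ⟨e, heJ, heI, Set.insert_subset (hJ.1 heJ) hI.1, ?_⟩
      rw [Set.encard_insert_of_notMem heI]
      exact (Order.add_one_le_of_lt hlt).trans hJ.2)
    ⟨r, fun _ hI => hI.2⟩ (fun _ hI => hI.1)).matroid

theorem uniformOn_indep_iff : (uniformOn E r).Indep I ↔ I ⊆ E ∧ I.encard ≤ r := Iff.rfl

end Uniform

section Colouring

variable {α β : Type*} {E : Set α} {S : Set β} {c : α → β} {e x : α}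

theorem comapOn_uniformOn_isNonloop_iff :
    ((uniformOn S 2).comapOn E c).IsNonloop e ↔ e ∈ E ∧ c e ∈ S := by
  rw [← indep_singleton, comapOn_indep_iff, uniformOn_indep_iff]
  simp [and_comm]

theorem comapOn_uniformOn_closure_eq_iff (he : ((uniformOn S 2).comapOn E c).IsNonloop e)
    (hx : ((uniformOn S 2).comapOn E c).IsNonloop x) :
    ((uniformOn S 2).comapOn E c).closure {e} = ((uniformOn S 2).comapOn E c).closure {x} ↔
      c e = c x := by
  rw [he.closure_eq_closure_iff_eq_or_dep hx, comapOn_indep_iff, uniformOn_indep_iff]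
  rw [comapOn_uniformOn_isNonloop_iff] at he hx
  have hcard : ({c e, c x} : Set β).encard ≤ (2 : ℕ) :=
    (Set.encard_insert_le _ _).trans (by norm_num)
  simp only [Set.image_pair, Set.pair_subset he.2 hx.2, hcard, Set.injOn_pair,
    Set.pair_subset he.1 hx.1, true_and, and_true]
  by_cases hex : e = x <;> simp [hex]

end Colouring

section ParallelClasses

variable {n : ℕ} {M N : Matroid ℕ} {e : ℕ}

open Classical in
noncomputable def nonloops (n : ℕ) (M : Matroid ℕ) : Finset ℕ := {e ∈ Icc 1 n | M.IsNonloop e}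

open Classical in
noncomputable def parallelClassSizes (n : ℕ) (M : Matroid ℕ) : Multiset ℕ :=
  fiberSizes (nonloops n M) fun e => M.closure {e}

theorem nonloops_subset_Icc : nonloops n M ⊆ Icc 1 n := by
  classical
  exact filter_subset _ _

theorem mem_nonloops (hM : M.E = Set.Icc 1 n) : e ∈ nonloops n M ↔ M.IsNonloop e := by
  simp only [nonloops, mem_filter, mem_Icc, and_iff_right_iff_imp]
  exact fun he => by simpa [hM] using he.mem_ground

theorem coe_nonloops (hM : M.E = Set.Icc 1 n) :
    (nonloops n M : Set ℕ) = {e ∈ M.E | M.IsNonloop e} := by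
  ext e
  simp only [mem_coe, mem_nonloops hM, Set.mem_ofPred_eq, iff_and_self]
  exact IsNonloop.mem_ground

theorem matroidIso_iff_parallelClassSizes_eq (hM : M ∈ rank2On n) (hN : N ∈ rank2On n) :
    MatroidIso M N ↔ parallelClassSizes n M = parallelClassSizes n N := by
  rw [matroidIso_iff_exists_isBase_pair hM.2 hN.2]
  constructor
  · rintro ⟨f, hf, hB⟩
    obtain ⟨hnl, hpar⟩ := (forall_isBase_pair_iff hM.2 hN.2 hf).1 hB
    refine fiberSizes_eq_of_bijOn (f := f) ?_ fun e he x hx =>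
      hpar e x ((mem_nonloops hM.1).1 he) ((mem_nonloops hM.1).1 hx)
    rw [coe_nonloops hM.1, coe_nonloops hN.1]
    exact hf.sep fun e he => (hnl e he).symm
  · intro h
    obtain ⟨φ, hφ, hφpar⟩ := exists_bijOn_of_fiberSizes_eq h
    obtain ⟨F, hF, hFφ, hFnl⟩ :=
      exists_bijOn_extend hφ nonloops_subset_Icc nonloops_subset_Icc rfl
    have hF' : Set.BijOn F M.E N.E := by rwa [hM.1, hN.1, ← coe_Icc]
    refine ⟨F, hF', (forall_isBase_pair_iff hM.2 hN.2 hF').2 ⟨fun e he => ?_, fun e x he hx => ?_⟩⟩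
    · rw [← mem_nonloops hM.1, ← mem_nonloops hN.1]
      exact (hFnl e (by simpa [hM.1] using he)).symm
    · rw [← mem_nonloops hM.1] at he hx
      rw [hFφ he, hFφ hx]
      exact hφpar e he x hx

def classSizeProfiles (k : ℕ) : Set (Multiset ℕ) :=
  {μ | (∀ i ∈ μ, 0 < i) ∧ 2 ≤ Multiset.card μ ∧ μ.sum ≤ k}

theorem parallelClassSizes_mem_classSizeProfiles (hM : M ∈ rank2On n) :
    parallelClassSizes n M ∈ classSizeProfiles n := by
  refine ⟨fun i hi => pos_of_mem_fiberSizes hi, ?_, ?_⟩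
  · obtain ⟨B, hB⟩ := M.exists_isBase
    obtain ⟨e, x, -, rfl⟩ := Set.ncard_eq_two.1 (hM.2 B hB)
    obtain ⟨he, hx, hex⟩ := (isBase_pair_iff hM.2).1 hB
    rw [parallelClassSizes, card_fiberSizes, Nat.succ_le_iff, one_lt_card]
    exact ⟨_, mem_image_of_mem _ ((mem_nonloops hM.1).2 he),
      _, mem_image_of_mem _ ((mem_nonloops hM.1).2 hx), hex⟩
  · rw [parallelClassSizes, sum_fiberSizes]
    simpa using card_le_card (nonloops_subset_Icc (n := n) (M := M))

theorem exists_mem_rank2On_parallelClassSizes_eq {k : ℕ} {μ : Multiset ℕ}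
    (hμ : μ ∈ classSizeProfiles k) : ∃ M ∈ rank2On k, parallelClassSizes k M = μ := by
  obtain ⟨hpos, hcard, hsum⟩ := hμ
  obtain ⟨c, hc0, hcμ⟩ := exists_fiberSizes_Icc_eq μ hpos
  set M := (uniformOn {0}ᶜ 2).comapOn (Set.Icc 1 k) c
  have hnl (e : ℕ) : M.IsNonloop e ↔ e ∈ Icc 1 μ.sum := by
    rw [comapOn_uniformOn_isNonloop_iff, Set.mem_compl_singleton_iff, hc0, Set.mem_Icc, mem_Icc]
    omega
  have hcl {e x : ℕ} (he : e ∈ Icc 1 μ.sum) (hx : x ∈ Icc 1 μ.sum) :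
      M.closure {e} = M.closure {x} ↔ c e = c x :=
    comapOn_uniformOn_closure_eq_iff ((hnl e).2 he) ((hnl x).2 hx)
  have hnonloops : nonloops k M = Icc 1 μ.sum := by
    ext e
    rw [mem_nonloops rfl, hnl]
  refine ⟨M, ⟨rfl, ?_⟩, ?_⟩
  · obtain ⟨_, hc₁, _, hc₂, hne⟩ :=
      one_lt_card.1 (by rwa [← card_fiberSizes, hcμ] : 1 < #((Icc 1 μ.sum).image c))
    obtain ⟨e, he, rfl⟩ := mem_image.1 hc₁
    obtain ⟨x, hx, rfl⟩ := mem_image.1 hc₂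
    have hex : e ≠ x := by rintro rfl; exact hne rfl
    refine rankEq_of_forall_indep_encard_le (I := {e, x}) (fun J hJ => ?_) ?_ (Set.encard_pair hex)
    · rw [comapOn_indep_iff, uniformOn_indep_iff] at hJ
      rw [← hJ.2.1.encard_image]
      exact hJ.1.2
    · by_contra hI
      exact hne ((hcl he hx).1
        ((((hnl e).2 he).closure_eq_closure_iff_eq_or_dep ((hnl x).2 hx)).2 (Or.inr hI)))
  · rw [parallelClassSizes, hnonloops]
    exact (fiberSizes_eq_of_bijOn (Set.bijOn_id _) fun e he x hx => hcl he hx).trans hcμ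

theorem image_parallelClassSizes_rank2On (k : ℕ) :
    parallelClassSizes k '' rank2On k = classSizeProfiles k := by
  refine Set.Subset.antisymm ?_ fun μ hμ => exists_mem_rank2On_parallelClassSizes_eq hμ
  rintro _ ⟨M, hM, rfl⟩
  exact parallelClassSizes_mem_classSizeProfiles hM

end ParallelClasses

theorem numIsoClasses_eq_ncard_image {X : Type*} {S : Set (Matroid ℕ)} (inv : Matroid ℕ → X)
    (hinv : ∀ M ∈ S, ∀ N ∈ S, MatroidIso M N ↔ inv M = inv N) :
    numIsoClasses S = (inv '' S).ncard := by
  set F : X → Set (Matroid ℕ) := fun μ => {N ∈ S | inv N = μ}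
  have hclass {M : Matroid ℕ} (hM : M ∈ S) : {N ∈ S | MatroidIso M N} = F (inv M) :=
    Set.ext fun N => and_congr_right fun hN => (hinv M hM N hN).trans eq_comm
  have hclasses : {C | ∃ M ∈ S, C = {N ∈ S | MatroidIso M N}} = F '' (inv '' S) := by
    rw [Set.image_image]
    ext C
    exact exists_congr fun M => and_congr_right fun hM => by rw [hclass hM, eq_comm]
  rw [numIsoClasses, hclasses, Set.InjOn.ncard_image]
  rintro _ ⟨M, hM, rfl⟩ _ ⟨M', -, rfl⟩ hF
  exact (show M ∈ F (inv M') from hF ▸ ⟨hM, rfl⟩).2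

theorem finite_classSizeProfiles (k : ℕ) : (classSizeProfiles k).Finite := by
  refine (Set.finite_range fun p : Σ j : Fin (k + 1), Nat.Partition j => p.2.parts).subset ?_
  rintro μ ⟨hpos, -, hsum⟩
  exact ⟨⟨⟨μ.sum, Nat.lt_succ_of_le hsum⟩, ⟨μ, fun hi => hpos _ hi, rfl⟩⟩, rfl⟩

theorem ncard_classSizeProfiles_succ (k : ℕ) :
    (classSizeProfiles (k + 1)).ncard =
      (classSizeProfiles k).ncard +
        Nat.card {p : (k + 1).Partition // 2 ≤ Multiset.card p.parts} := by
  set Q := {μ : Multiset ℕ | (∀ i ∈ μ, 0 < i) ∧ 2 ≤ Multiset.card μ ∧ μ.sum = k + 1}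
  have hunion : classSizeProfiles (k + 1) = classSizeProfiles k ∪ Q := by
    ext μ
    simp only [classSizeProfiles, Q, Set.mem_union, Set.mem_ofPred_eq, Nat.le_succ_iff,
      ← and_or_left]
  have hdisj : Disjoint (classSizeProfiles k) Q :=
    Set.disjoint_left.2 fun μ h h' => by linarith [h.2.2, h'.2.2]
  have hQ : Q.ncard = Nat.card {p : (k + 1).Partition // 2 ≤ Multiset.card p.parts} := by
    rw [← Nat.card_coe_set_eq]
    exact Nat.card_congr
      { toFun μ := ⟨⟨μ.1, fun hi => μ.2.1 _ hi, μ.2.2.2⟩, μ.2.2.1⟩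
        invFun p := ⟨p.1.parts, fun _ hi => p.1.parts_pos hi, p.2, p.1.parts_sum⟩
        left_inv _ := rfl
        right_inv _ := rfl }
  rw [hunion, Set.ncard_union_eq hdisj (finite_classSizeProfiles k)
    ((finite_classSizeProfiles (k + 1)).subset (hunion ▸ Set.subset_union_right)), hQ]

theorem card_partition_eq_card_two_le_card_parts_add_one {j : ℕ} (hj : j ≠ 0) :
    Nat.card j.Partition = Nat.card {p : j.Partition // 2 ≤ Multiset.card p.parts} + 1 := by
  have hindiscrete (p : j.Partition) :
      ¬ 2 ≤ Multiset.card p.parts ↔ p = Nat.Partition.indiscrete j := by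
    refine ⟨fun hp => ?_, fun hp => by simp [hp, Nat.Partition.indiscrete_parts hj]⟩
    have hne : p.parts ≠ 0 := fun h => hj (by rw [← p.parts_sum, h, Multiset.sum_zero])
    have hcard : Multiset.card p.parts = 1 := by
      have := Multiset.card_pos.2 hne
      omega
    obtain ⟨a, ha⟩ := Multiset.card_eq_one.1 hcard
    have haj : a = j := by simpa [ha] using p.parts_sum
    exact Nat.Partition.ext (by rw [ha, haj, Nat.Partition.indiscrete_parts hj])
  rw [← Nat.card_congr (Equiv.sumCompl fun p : j.Partition => 2 ≤ Multiset.card p.parts),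
    Nat.card_sum, Nat.card_congr (Equiv.subtypeEquivRight hindiscrete),
    Nat.card_unique (α := {p // p = Nat.Partition.indiscrete j})]

theorem card_partition_succ (k : ℕ) :
    Nat.card (k + 1).Partition = Nat.card k.Partition + rho (k + 1) := by
  have hparts (p : (k + 1).Partition) : 1 ∉ p.parts ↔ ∀ i ∈ p.parts, 2 ≤ i := by
    refine ⟨fun h i hi => ?_, fun h h1 => absurd (h 1 h1) (by norm_num)⟩
    have := p.parts_pos hi
    have : i ≠ 1 := fun hi1 => h (hi1 ▸ hi)
    omega
  rw [← Nat.card_congr (Equiv.sumCompl fun p : (k + 1).Partition => 1 ∈ p.parts), Nat.card_sum,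
    Nat.card_congr (Nat.Partition.partitionWithPartEquiv le_rfl (Nat.le_add_left 1 k)),
    Nat.card_congr (Equiv.subtypeEquivRight hparts), rho, Nat.add_sub_cancel]

theorem numIsoClasses_rank2On (k : ℕ) :
    numIsoClasses (rank2On k) = (classSizeProfiles k).ncard := by
  rw [numIsoClasses_eq_ncard_image (parallelClassSizes k)
    fun M hM N hN => matroidIso_iff_parallelClassSizes_eq hM hN, image_parallelClassSizes_rank2On]

/-- for `n ≥ 4`, the number `m(n)` of isomorphism classes of rank-2
matroids on an `n`-element ground set satisfies `m(n) = 2·m(n−1) − m(n−2) + ρ(n)`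
(stated additively as `m(n) + m(n−2) = 2·m(n−1) + ρ(n)`). -/
theorem statement_7 (n : ℕ) (hn : 4 ≤ n) :
    numIsoClasses (rank2On n) + numIsoClasses (rank2On (n - 2)) =
      2 * numIsoClasses (rank2On (n - 1)) + rho n := by
  obtain ⟨k, rfl⟩ : ∃ k, n = k + 1 + 1 := ⟨n - 2, by omega⟩
  simp only [numIsoClasses_rank2On, Nat.add_sub_cancel, show k + 1 + 1 - 2 = k by omega]
  have h₁ := ncard_classSizeProfiles_succ (k + 1)
  have h₂ := ncard_classSizeProfiles_succ k
  have h₃ := card_partition_eq_card_two_le_card_parts_add_one (j := k + 1 + 1) (by omega)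
  have h₄ := card_partition_eq_card_two_le_card_parts_add_one (j := k + 1) (by omega)
  have h₅ := card_partition_succ (k + 1)
  omega

end PaperPOAM
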